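/- Let L be a Leibniz A-algebra. Then the lower nilpotent series of L coincides with the derived series of L, i.e. N_i(L) = L^(i) for all i ≥ 0. -/

import Mathlib

/-- A (right) Leibniz algebra structure on an `F`-vector space `L`:
a bilinear bracket satisfying `[x,[y,z]] = [[x,y],z] - [[x,z],y]`. -/
structure LeibnizAlg (F : Type*) (L : Type*) [Field F] [AddCommGroup L] [Module F L] where
  bracket : L →ₗ[F] L →ₗ[F] L
  leibniz : ∀ x y z : L,
    bracket x (bracket y z) = bracket (bracket x y) z - bracket (bracket x z) y

namespace LeibnizAlg

variable {F : Type*} {L : Type*} [Field F] [AddCommGroup L] [Module F L]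

/-- The product `[M, N]` of two subspaces: the span of all brackets `[m, n]`. -/
def prod (A : LeibnizAlg F L) (M N : Submodule F L) : Submodule F L :=
  Submodule.span F {z : L | ∃ m ∈ M, ∃ n ∈ N, z = A.bracket m n}

/-- A subalgebra: a subspace closed under the product. -/
def IsSubalgebra (A : LeibnizAlg F L) (S : Submodule F L) : Prop :=
  A.prod S S ≤ S

/-- A (two-sided) ideal: `[I, L] ⊆ I` and `[L, I] ⊆ I`. -/
def IsIdeal (A : LeibnizAlg F L) (I : Submodule F L) : Prop :=
  A.prod I ⊤ ≤ I ∧ A.prod ⊤ I ≤ I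

/-- Lower central series of a subspace `U`: `lcs U 0 = U = U¹`,
`lcs U k = U^(k+1)`, i.e. `lcs U (k+1) = [lcs U k, U]`. -/
def lcs (A : LeibnizAlg F L) (U : Submodule F L) : ℕ → Submodule F L
  | 0 => U
  | k + 1 => A.prod (lcs A U k) U

/-- `U` is nilpotent: `U^(n+1) = 0` for some `n`. -/
def IsNilpotentSub (A : LeibnizAlg F L) (U : Submodule F L) : Prop :=
  ∃ n : ℕ, A.lcs U n = ⊥

/-- `U` is abelian: `[U, U] = 0`. -/
def IsAbelian (A : LeibnizAlg F L) (U : Submodule F L) : Prop :=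
  A.prod U U = ⊥

/-- An `A`-algebra: every nilpotent subalgebra is abelian. -/
def IsAAlgebra (A : LeibnizAlg F L) : Prop :=
  ∀ U : Submodule F L, A.IsSubalgebra U → A.IsNilpotentSub U → A.IsAbelian U

/-- Derived series: `derSeries 0 = L`, `derSeries (k+1) = [derSeries k, derSeries k]`. -/
def derSeries (A : LeibnizAlg F L) : ℕ → Submodule F L
  | 0 => ⊤
  | k + 1 => A.prod (derSeries A k) (derSeries A k)

/-- `L` is solvable: some term of the derived series vanishes. -/
def IsSolvable (A : LeibnizAlg F L) : Prop :=
  ∃ n : ℕ, A.derSeries n = ⊥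

/-- The centralizer `Z_L(U)` of a subspace `U`. -/
def centralizer (A : LeibnizAlg F L) (U : Submodule F L) : Submodule F L where
  carrier := {x : L | ∀ u ∈ U, A.bracket x u = 0 ∧ A.bracket u x = 0}
  add_mem' := by
    intro a b ha hb u hu
    refine ⟨?_, ?_⟩
    · rw [map_add, LinearMap.add_apply, (ha u hu).1, (hb u hu).1, add_zero]
    · rw [map_add, (ha u hu).2, (hb u hu).2, add_zero]
  zero_mem' := by
    intro u hu
    refine ⟨?_, ?_⟩
    · rw [map_zero, LinearMap.zero_apply]
    · rw [map_zero]
  smul_mem' := by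
    intro c a ha u hu
    refine ⟨?_, ?_⟩
    · rw [map_smul, LinearMap.smul_apply, (ha u hu).1, smul_zero]
    · rw [map_smul, (ha u hu).2, smul_zero]

/-- The centre of the subalgebra `M`: elements of `M` centralizing `M`. -/
def centerOf (A : LeibnizAlg F L) (M : Submodule F L) : Submodule F L :=
  M ⊓ A.centralizer M

/-- `N` is the nilradical: the largest nilpotent ideal. -/
def IsNilradical (A : LeibnizAlg F L) (N : Submodule F L) : Prop :=
  A.IsIdeal N ∧ A.IsNilpotentSub N ∧
    ∀ I : Submodule F L, A.IsIdeal I → A.IsNilpotentSub I → I ≤ N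

/-- A minimal ideal: a nonzero ideal containing no ideal other than `0` and itself. -/
def IsMinimalIdeal (A : LeibnizAlg F L) (I : Submodule F L) : Prop :=
  A.IsIdeal I ∧ I ≠ ⊥ ∧ ∀ J : Submodule F L, A.IsIdeal J → J ≤ I → J = ⊥ ∨ J = I

/-- A maximal subalgebra. -/
def IsMaximalSubalgebra (A : LeibnizAlg F L) (M : Submodule F L) : Prop :=
  A.IsSubalgebra M ∧ M ≠ ⊤ ∧
    ∀ S : Submodule F L, A.IsSubalgebra S → M ≤ S → S = M ∨ S = ⊤

/-- `L` is φ-free: every ideal contained in all maximal subalgebras is zero. -/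
def IsPhiFree (A : LeibnizAlg F L) : Prop :=
  ∀ I : Submodule F L, A.IsIdeal I →
    (∀ M : Submodule F L, A.IsMaximalSubalgebra M → I ≤ M) → I = ⊥

/-- `Asoc L`: the sum of the abelian minimal ideals. -/
def asoc (A : LeibnizAlg F L) : Submodule F L :=
  sSup {I : Submodule F L | A.IsMinimalIdeal I ∧ A.IsAbelian I}

/-- A Cartan subalgebra: a nilpotent, self-normalizing subalgebra. -/
def IsCartan (A : LeibnizAlg F L) (C : Submodule F L) : Prop :=
  A.IsSubalgebra C ∧ A.IsNilpotentSub C ∧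
    ∀ x : L, (∀ c ∈ C, A.bracket x c ∈ C ∧ A.bracket c x ∈ C) → x ∈ C

/-- A maximal nilpotent subalgebra. -/
def IsMaxNilpotentSubalgebra (A : LeibnizAlg F L) (U : Submodule F L) : Prop :=
  A.IsSubalgebra U ∧ A.IsNilpotentSub U ∧
    ∀ V : Submodule F L, A.IsSubalgebra V → A.IsNilpotentSub V → U ≤ V → V = U

end LeibnizAlg

namespace LeibnizAlg

variable {F : Type*} {L : Type*} [Field F] [AddCommGroup L] [Module F L]

/-- The nilpotent residual `γ_∞(U)`: the intersection of the terms of the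
lower central series of `U`. -/
def nilpotentResidual (A : LeibnizAlg F L) (U : Submodule F L) : Submodule F L :=
  ⨅ k : ℕ, A.lcs U k

/-- The lower nilpotent series: `N_0(L) = L`, `N_{i+1}(L) = γ_∞(N_i(L))`. -/
def lowerNilpotentSeries (A : LeibnizAlg F L) : ℕ → Submodule F L
  | 0 => ⊤
  | i + 1 => A.nilpotentResidual (lowerNilpotentSeries A i)

end LeibnizAlg

/-!
Always `γ_∞(W) ⊆ W² = [W, W]`; the content is `[W, W] ⊆ γ_∞(W)` for every subalgebra `W`,
applied to `W = L^(i)`. If every right multiplication `R_x` of `W` is nilpotent, `W` is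
nilpotent by Engel's theorem. Otherwise the Fitting decomposition `W = W₀ ⊕ W₁` of a
non-nilpotent `R_x` has `W₀` a proper subalgebra (`R_x` is a derivation) and
`W₁ ⊆ R_x^k W ⊆ W^{k+1}` for all `k`, so `W₁ ⊆ γ_∞(W)`. Induction on `W` yields a nilpotent
subalgebra `C` with `W = C + γ_∞(W)`. In an A-algebra `C` is abelian, and `γ_∞(W)` is an ideal
of `W`, hence `[W, W] ⊆ [C, C] + γ_∞(W) = γ_∞(W)`.
-/

namespace Module.End

variable {R M : Type*} [CommSemiring R] [AddCommMonoid M] [Module R M]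

theorem pow_add_apply_eq_zero_of_leibniz (B : M →ₗ[R] M →ₗ[R] M) (D : Module.End R M)
    (hD : ∀ u v, D (B u v) = B (D u) v + B u (D v)) {i j : ℕ} {a b : M}
    (ha : (D ^ i) a = 0) (hb : (D ^ j) b = 0) : (D ^ (i + j)) (B a b) = 0 := by
  induction i generalizing a j b with
  | zero => simp_all
  | succ i ihi =>
    induction j generalizing b with
    | zero => simp_all
    | succ j ihj =>
      rw [pow_succ, mul_apply] at ha hb
      rw [show i + 1 + (j + 1) = i + (j + 1) + 1 by omega, pow_succ, mul_apply, hD, map_add,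
        ihi ha (by rwa [pow_succ, mul_apply]), show i + (j + 1) = i + 1 + j by omega, ihj hb,
        zero_add]

theorem apply_mem_iSup_ker_pow_of_leibniz (B : M →ₗ[R] M →ₗ[R] M) (D : Module.End R M)
    (hD : ∀ u v, D (B u v) = B (D u) v + B u (D v)) {a b : M}
    (ha : a ∈ ⨆ n, LinearMap.ker (D ^ n)) (hb : b ∈ ⨆ n, LinearMap.ker (D ^ n)) :
    B a b ∈ ⨆ n, LinearMap.ker (D ^ n) := by
  have mem_iff (x : M) : x ∈ ⨆ n, LinearMap.ker (D ^ n) ↔ ∃ n, (D ^ n) x = 0 :=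
    Submodule.mem_iSup_of_chain D.iterateKer x
  obtain ⟨i, hi⟩ := (mem_iff a).1 ha
  obtain ⟨j, hj⟩ := (mem_iff b).1 hb
  exact (mem_iff _).2 ⟨i + j, pow_add_apply_eq_zero_of_leibniz B D hD hi hj⟩

end Module.End

namespace LeibnizAlg

variable {F L : Type*} [Field F] [AddCommGroup L] [Module F L] (A : LeibnizAlg F L)

theorem bracket_mem_prod {M N : Submodule F L} {m n : L} (hm : m ∈ M) (hn : n ∈ N) :
    A.bracket m n ∈ A.prod M N :=
  Submodule.subset_span ⟨m, hm, n, hn, rfl⟩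

theorem prod_le_iff {M N P : Submodule F L} :
    A.prod M N ≤ P ↔ ∀ m ∈ M, ∀ n ∈ N, A.bracket m n ∈ P := by
  refine ⟨fun h m hm n hn => h (A.bracket_mem_prod hm hn), fun h => Submodule.span_le.2 ?_⟩
  rintro _ ⟨m, hm, n, hn, rfl⟩
  exact h m hm n hn

theorem prod_mono {M M' N N' : Submodule F L} (hM : M ≤ M') (hN : N ≤ N') :
    A.prod M N ≤ A.prod M' N' :=
  A.prod_le_iff.2 fun _ hm _ hn => A.bracket_mem_prod (hM hm) (hN hn)

theorem prod_prod_le_iff {M N N' P : Submodule F L} :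
    A.prod M (A.prod N N') ≤ P ↔
      ∀ m ∈ M, ∀ n ∈ N, ∀ n' ∈ N', A.bracket m (A.bracket n n') ∈ P := by
  refine ⟨fun h m hm n hn n' hn' => h (A.bracket_mem_prod hm (A.bracket_mem_prod hn hn')),
    fun h => A.prod_le_iff.2 fun m hm z hz => ?_⟩
  exact (A.prod_le_iff (P := P.comap (A.bracket m))).2 (h m hm) hz

theorem prod_sup_left_le_iff {M M' N P : Submodule F L} :
    A.prod (M ⊔ M') N ≤ P ↔ A.prod M N ≤ P ∧ A.prod M' N ≤ P := by
  refine ⟨fun h => ⟨(A.prod_mono le_sup_left le_rfl).trans h,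
    (A.prod_mono le_sup_right le_rfl).trans h⟩, fun ⟨h, h'⟩ => A.prod_le_iff.2 ?_⟩
  intro m hm n hn
  obtain ⟨a, ha, a', ha', rfl⟩ := Submodule.mem_sup.1 hm
  rw [map_add, LinearMap.add_apply]
  exact add_mem (h (A.bracket_mem_prod ha hn)) (h' (A.bracket_mem_prod ha' hn))

theorem prod_sup_right_le_iff {M N N' P : Submodule F L} :
    A.prod M (N ⊔ N') ≤ P ↔ A.prod M N ≤ P ∧ A.prod M N' ≤ P := by
  refine ⟨fun h => ⟨(A.prod_mono le_rfl le_sup_left).trans h,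
    (A.prod_mono le_rfl le_sup_right).trans h⟩, fun ⟨h, h'⟩ => A.prod_le_iff.2 ?_⟩
  intro m hm n hn
  obtain ⟨b, hb, b', hb', rfl⟩ := Submodule.mem_sup.1 hn
  rw [map_add]
  exact add_mem (h (A.bracket_mem_prod hm hb)) (h' (A.bracket_mem_prod hm hb'))

section LowerCentralSeries

variable {U : Submodule F L}

theorem lcs_mono {V : Submodule F L} (h : U ≤ V) : ∀ k, A.lcs U k ≤ A.lcs V k
  | 0 => h
  | k + 1 => A.prod_mono (lcs_mono h k) h

theorem lcs_succ_le (hU : A.IsSubalgebra U) : ∀ k, A.lcs U (k + 1) ≤ A.lcs U k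
  | 0 => hU
  | k + 1 => A.prod_mono (lcs_succ_le hU k) le_rfl

theorem prod_lcs_lcs_le (j k : ℕ) : A.prod (A.lcs U j) (A.lcs U k) ≤ A.lcs U (j + k + 1) := by
  induction k generalizing j with
  | zero => exact le_rfl
  | succ k ih =>
    refine A.prod_prod_le_iff.2 fun a ha b hb u hu => ?_
    rw [A.leibniz]
    refine sub_mem (A.bracket_mem_prod (ih j (A.bracket_mem_prod ha hb)) hu) ?_
    have := ih (j + 1) (A.bracket_mem_prod (A.bracket_mem_prod ha hu) hb)
    rwa [Nat.add_right_comm j 1 k] at this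

theorem nilpotentResidual_le_lcs (k : ℕ) : A.nilpotentResidual U ≤ A.lcs U k :=
  iInf_le _ k

theorem nilpotentResidual_le_self : A.nilpotentResidual U ≤ U :=
  A.nilpotentResidual_le_lcs 0

theorem nilpotentResidual_mono {V : Submodule F L} (h : U ≤ V) :
    A.nilpotentResidual U ≤ A.nilpotentResidual V :=
  le_iInf fun k => (A.nilpotentResidual_le_lcs k).trans (A.lcs_mono h k)

theorem prod_nilpotentResidual_left_le (hU : A.IsSubalgebra U) :
    A.prod (A.nilpotentResidual U) U ≤ A.nilpotentResidual U :=
  le_iInf fun k => (A.prod_mono (A.nilpotentResidual_le_lcs k) le_rfl).trans (A.lcs_succ_le hU k)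

theorem prod_nilpotentResidual_right_le (hU : A.IsSubalgebra U) :
    A.prod U (A.nilpotentResidual U) ≤ A.nilpotentResidual U :=
  le_iInf fun k => calc
    A.prod U (A.nilpotentResidual U) ≤ A.prod (A.lcs U 0) (A.lcs U k) :=
      A.prod_mono le_rfl (A.nilpotentResidual_le_lcs k)
    _ ≤ A.lcs U (k + 1) := by simpa using A.prod_lcs_lcs_le 0 k
    _ ≤ A.lcs U k := A.lcs_succ_le hU k

end LowerCentralSeries

theorem derSeries_succ_le : ∀ i, A.derSeries (i + 1) ≤ A.derSeries i
  | 0 => le_top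
  | i + 1 => A.prod_mono (derSeries_succ_le i) (derSeries_succ_le i)

theorem isSubalgebra_derSeries (i : ℕ) : A.IsSubalgebra (A.derSeries i) :=
  A.derSeries_succ_le i

section Subalgebra

variable {W : Submodule F L}

def bracketOn (hW : A.IsSubalgebra W) : W →ₗ[F] W →ₗ[F] W :=
  LinearMap.mk₂ F (fun u v => ⟨A.bracket u v, hW (A.bracket_mem_prod u.2 v.2)⟩)
    (fun _ _ _ => by ext; simp) (fun _ _ _ => by ext; simp)
    (fun _ _ _ => by ext; simp) (fun _ _ _ => by ext; simp)

@[simp]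
theorem coe_bracketOn (hW : A.IsSubalgebra W) (u v : W) :
    (A.bracketOn hW u v : L) = A.bracket u v :=
  rfl

theorem bracketOn_leibniz (hW : A.IsSubalgebra W) (x u v : W) :
    A.bracketOn hW x (A.bracketOn hW u v) =
      A.bracketOn hW (A.bracketOn hW x u) v - A.bracketOn hW (A.bracketOn hW x v) u := by
  ext
  simp [A.leibniz]

theorem bracketOn_flip_leibniz (hW : A.IsSubalgebra W) (x u v : W) :
    (A.bracketOn hW).flip x (A.bracketOn hW u v) =
      A.bracketOn hW ((A.bracketOn hW).flip x u) v +
        A.bracketOn hW u ((A.bracketOn hW).flip x v) := by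
  ext
  simp only [LinearMap.flip_apply, Submodule.coe_add, coe_bracketOn, A.leibniz u v x]
  abel

section Engel

attribute [local instance] LieRing.ofAssociativeRing

theorem isNilpotentSub_of_forall_isNilpotent [FiniteDimensional F L] (hW : A.IsSubalgebra W)
    (h : ∀ x, IsNilpotent ((A.bracketOn hW).flip x)) : A.IsNilpotentSub W := by
  -- `R_{[y,x]} = ⁅R_x, R_y⁆` by the Leibniz identity, so Engel's theorem for Lie modules applies.
  let S : LieSubalgebra F (Module.End F W) :=
    { LinearMap.range (A.bracketOn hW).flip with
      lie_mem' := by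
        rintro _ _ ⟨x, rfl⟩ ⟨y, rfl⟩
        refine ⟨A.bracketOn hW y x, LinearMap.ext fun a => ?_⟩
        simp [Ring.lie_def, A.bracketOn_leibniz] }
  have hS : LieModule.IsNilpotent S W :=
    (LieModule.isNilpotent_iff_forall' (R := F)).2 fun ⟨_, x, rfl⟩ => h x
  obtain ⟨k, hk⟩ := (LieModule.isNilpotent_iff F S W).1 hS
  have lcs_le (j : ℕ) :
      A.lcs W j ≤ (LieModule.lowerCentralSeries F S W j : Submodule F W).map W.subtype := by
    induction j with
    | zero => simp [lcs]
    | succ j ih =>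
      refine A.prod_le_iff.2 fun m hm u hu => ?_
      obtain ⟨m', hm', rfl⟩ := ih hm
      refine ⟨⁅(⟨(A.bracketOn hW).flip ⟨u, hu⟩, ⟨u, hu⟩, rfl⟩ : S), m'⁆, ?_, rfl⟩
      rw [LieModule.lowerCentralSeries_succ]
      exact LieSubmodule.lie_mem_lie (LieSubmodule.mem_top _) hm'
  refine ⟨k, eq_bot_iff.2 ((lcs_le k).trans ?_)⟩
  simp [hk]

end Engel

theorem coe_bracketOn_flip_pow_mem_lcs (hW : A.IsSubalgebra W) (x w : W) (n : ℕ) :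
    (((A.bracketOn hW).flip x ^ n) w : L) ∈ A.lcs W n := by
  induction n with
  | zero => exact w.2
  | succ n ih =>
    rw [pow_succ', Module.End.mul_apply]
    exact A.bracket_mem_prod ih x.2

theorem exists_lt_isSubalgebra_le_sup_nilpotentResidual [FiniteDimensional F L]
    (hW : A.IsSubalgebra W) {x : W} (hx : ¬ IsNilpotent ((A.bracketOn hW).flip x)) :
    ∃ V < W, A.IsSubalgebra V ∧ W ≤ V ⊔ A.nilpotentResidual W := by
  set f := (A.bracketOn hW).flip x
  have hfitting := f.isCompl_iSup_ker_pow_iInf_range_pow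
  refine ⟨(⨆ n, LinearMap.ker (f ^ n)).map W.subtype, ?_, ?_, ?_⟩
  · have hne : ⨆ n, LinearMap.ker (f ^ n) ≠ ⊤ := by
      refine fun htop => hx (Module.End.isNilpotent_iff_of_finite.2 fun w => ?_)
      exact (Submodule.mem_iSup_of_chain f.iterateKer w).1 (htop ▸ Submodule.mem_top)
    simpa using Submodule.map_strictMono_of_injective W.injective_subtype (lt_top_iff_ne_top.2 hne)
  · refine A.prod_le_iff.2 ?_
    rintro _ ⟨a, ha, rfl⟩ _ ⟨b, hb, rfl⟩
    exact ⟨_, Module.End.apply_mem_iSup_ker_pow_of_leibniz _ f (A.bracketOn_flip_leibniz hW x)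
      ha hb, rfl⟩
  · have hrange : (⨅ n, LinearMap.range (f ^ n)).map W.subtype ≤ A.nilpotentResidual W := by
      rintro _ ⟨w, hw, rfl⟩
      refine Submodule.mem_iInf _ |>.2 fun n => ?_
      obtain ⟨v, rfl⟩ := Submodule.mem_iInf _ |>.1 hw n
      exact A.coe_bracketOn_flip_pow_mem_lcs hW x v n
    calc W = (⊤ : Submodule F W).map W.subtype := (Submodule.map_subtype_top W).symm
      _ = (⨆ n, LinearMap.ker (f ^ n)).map W.subtype ⊔
          (⨅ n, LinearMap.range (f ^ n)).map W.subtype := by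
        rw [← Submodule.map_sup, hfitting.sup_eq_top]
      _ ≤ _ := sup_le_sup_left hrange _

end Subalgebra

section FiniteDimensional

variable [FiniteDimensional F L]

theorem exists_isNilpotentSub_le_sup_nilpotentResidual (W : Submodule F L)
    (hW : A.IsSubalgebra W) :
    ∃ C ≤ W, A.IsSubalgebra C ∧ A.IsNilpotentSub C ∧ W ≤ C ⊔ A.nilpotentResidual W := by
  induction W using WellFoundedLT.induction with
  | _ W ih =>
    by_cases hW_nil : ∀ x, IsNilpotent ((A.bracketOn hW).flip x)
    · exact ⟨W, le_rfl, hW, A.isNilpotentSub_of_forall_isNilpotent hW hW_nil, le_sup_left⟩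
    push Not at hW_nil
    obtain ⟨x, hx⟩ := hW_nil
    obtain ⟨V, hVW, hV, hWV⟩ := A.exists_lt_isSubalgebra_le_sup_nilpotentResidual hW hx
    obtain ⟨C, hCV, hC, hC_nil, hVC⟩ := ih V hVW hV
    refine ⟨C, hCV.trans hVW.le, hC, hC_nil, ?_⟩
    calc W ≤ V ⊔ A.nilpotentResidual W := hWV
      _ ≤ C ⊔ A.nilpotentResidual V ⊔ A.nilpotentResidual W := sup_le_sup_right hVC _
      _ ≤ C ⊔ A.nilpotentResidual W := by
        rw [sup_assoc, sup_eq_right.2 (A.nilpotentResidual_mono hVW.le)]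

variable {A}

theorem prod_self_le_nilpotentResidual (hA : A.IsAAlgebra) {W : Submodule F L}
    (hW : A.IsSubalgebra W) : A.prod W W ≤ A.nilpotentResidual W := by
  obtain ⟨C, hCW, hC, hC_nil, hWC⟩ := A.exists_isNilpotentSub_le_sup_nilpotentResidual W hW
  set K := A.nilpotentResidual W
  have hKW : K ≤ W := A.nilpotentResidual_le_self
  refine (A.prod_mono hWC hWC).trans ?_
  simp only [A.prod_sup_left_le_iff, A.prod_sup_right_le_iff]
  refine ⟨⟨(hA C hC hC_nil).le.trans bot_le, ?_⟩, ?_, ?_⟩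
  · exact (A.prod_mono hCW le_rfl).trans (A.prod_nilpotentResidual_right_le hW)
  · exact (A.prod_mono le_rfl hCW).trans (A.prod_nilpotentResidual_left_le hW)
  · exact (A.prod_mono le_rfl hKW).trans (A.prod_nilpotentResidual_left_le hW)

theorem nilpotentResidual_eq_prod_self (hA : A.IsAAlgebra) {W : Submodule F L}
    (hW : A.IsSubalgebra W) : A.nilpotentResidual W = A.prod W W :=
  le_antisymm (A.nilpotentResidual_le_lcs 1) (prod_self_le_nilpotentResidual hA hW)

end FiniteDimensional

end LeibnizAlg

/-- For a Leibniz A-algebra `L`, the lower nilpotent series coincides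
with the derived series: `N_i(L) = L^(i)` for all `i ≥ 0`. -/
theorem lowerNilpotentSeries_eq_derSeries
    {F L : Type*} [Field F] [AddCommGroup L] [Module F L] [FiniteDimensional F L]
    (A : LeibnizAlg F L) (hA : A.IsAAlgebra) :
    ∀ i : ℕ, A.lowerNilpotentSeries i = A.derSeries i := by
  intro i
  induction i with
  | zero => rfl
  | succ i ih =>
    exact (congrArg A.nilpotentResidual ih).trans
      (LeibnizAlg.nilpotentResidual_eq_prod_self hA (A.isSubalgebra_derSeries i))
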